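/- arXiv:2412.12930 — 3 statements merged into one kernel-verified Lean document; each statement's English description precedes it below -/
import Mathlib

section
/- Let s ≤ t, let e : ℝ → V be continuously differentiable on [s, t], and let ρ : ℝ → ℝ be continuous on [s, t] such that for every τ ∈ [s, t] and every φ ∈ V the residual bound |m(e′(τ), φ) + a(e(τ), φ)| ≤ ρ(τ)·√(a(φ, φ)) holds. Then m(e(t), e(t)) + ∫_s^t a(e(τ), e(τ)) dτ ≤ ∫_s^t ρ(τ)² dτ + m(e(s), e(s)). (This is the per-interval forward energy estimate, inequality (3.13) in the proof of Lemma thm:errorBoundStateEnergy, for strong solutions on a subinterval on which the switching signal is constant; ρ(τ) bounds the a-dual norm of the residual R(τ) = ℬu(τ) − M ė(τ) − A e(τ).) -/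
/-!
Differentiating the energy `E(τ) = m(e(τ), e(τ))` gives `E' = 2 m(e', e)`, and testing the
residual bound with `φ = e(τ)` together with `2 ρ √a ≤ ρ² + a` yields `E' ≤ ρ² - a(e, e)`.
Integrating this differential inequality over `[s, t]` is the estimate.
-/

open Set

lemma two_mul_le_sq_sub_of_add_le_mul_sqrt {p q r : ℝ} (hq : 0 ≤ q)
    (h : p + q ≤ r * Real.sqrt q) : 2 * p ≤ r ^ 2 - q := by
  nlinarith [sq_nonneg (r - Real.sqrt q), Real.sq_sqrt hq]

lemma HasDerivWithinAt.bilinear_apply_self_of_symm {E : Type*} [NormedAddCommGroup E]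
    [NormedSpace ℝ E] (m : E →L[ℝ] E →L[ℝ] ℝ) (hm : ∀ x y, m x y = m y x)
    {e : ℝ → E} {e' : E} {S : Set ℝ} {τ : ℝ} (he : HasDerivWithinAt e e' S τ) :
    HasDerivWithinAt (fun τ => m (e τ) (e τ)) (2 * m e' (e τ)) S τ :=
  (m.hasDerivWithinAt_of_bilinear he he).congr_deriv (by rw [hm (e τ) e']; ring)

theorem per_interval_forward_energy_estimate_general
    {V : Type*} [NormedAddCommGroup V] [InnerProductSpace ℝ V]
    (m a : V →L[ℝ] V →L[ℝ] ℝ)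
    (hm_symm : ∀ x y : V, m x y = m y x)
    (ha_pos : ∀ φ : V, 0 ≤ a φ φ)
    (s t : ℝ) (hst : s ≤ t)
    (e e' : ℝ → V)
    (he : ∀ τ ∈ Set.Icc s t, HasDerivWithinAt e (e' τ) (Set.Icc s t) τ)
    (ρ : ℝ → ℝ) (hρ : ContinuousOn ρ (Set.Icc s t))
    (hres : ∀ τ ∈ Set.Icc s t, ∀ φ : V,
      |m (e' τ) φ + a (e τ) φ| ≤ ρ τ * Real.sqrt (a φ φ)) :
    m (e t) (e t) + ∫ τ in s..t, a (e τ) (e τ)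
      ≤ (∫ τ in s..t, (ρ τ)^2) + m (e s) (e s) := by
  have he_cont : ContinuousOn e (Icc s t) := fun τ hτ => (he τ hτ).continuousWithinAt
  have hE_cont : ContinuousOn (fun τ => m (e τ) (e τ)) (Icc s t) :=
    m.continuous₂.comp_continuousOn (he_cont.prodMk he_cont)
  have ha_cont : ContinuousOn (fun τ => a (e τ) (e τ)) (Icc s t) :=
    a.continuous₂.comp_continuousOn (he_cont.prodMk he_cont)
  have hρ_cont : ContinuousOn (fun τ => ρ τ ^ 2) (Icc s t) := hρ.pow 2
  have hE_deriv : ∀ τ ∈ Ioo s t,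
      HasDerivWithinAt (fun τ => m (e τ) (e τ)) (2 * m (e' τ) (e τ)) (Ioi τ) τ := fun τ hτ =>
    ((he τ (Ioo_subset_Icc_self hτ)).hasDerivAt (Icc_mem_nhds hτ.1 hτ.2)).hasDerivWithinAt
      |>.bilinear_apply_self_of_symm m hm_symm
  have hE'_le : ∀ τ ∈ Ioo s t, 2 * m (e' τ) (e τ) ≤ ρ τ ^ 2 - a (e τ) (e τ) := fun τ hτ =>
    two_mul_le_sq_sub_of_add_le_mul_sqrt (ha_pos (e τ))
      ((le_abs_self _).trans (hres τ (Ioo_subset_Icc_self hτ) (e τ)))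
  have henergy := intervalIntegral.sub_le_integral_of_hasDeriv_right_of_le
    (φ := fun τ => ρ τ ^ 2 - a (e τ) (e τ)) hst hE_cont hE_deriv
    ((hρ_cont.sub ha_cont).integrableOn_compact isCompact_Icc) hE'_le
  rw [intervalIntegral.integral_sub (hρ_cont.intervalIntegrable_of_Icc hst)
    (ha_cont.intervalIntegrable_of_Icc hst)] at henergy
  linarith

/-- Per-interval forward energy estimate, inequality (3.13) in the proof of
Lemma 3.7 (thm:errorBoundStateEnergy): if on `[s, t]` the error `e` satisfies the
residual bound `|m(e′(τ), φ) + a(e(τ), φ)| ≤ ρ(τ)·√(a(φ,φ))` for all `φ`, then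
`m(e(t), e(t)) + ∫ₛᵗ a(e, e) ≤ ∫ₛᵗ ρ² + m(e(s), e(s))`. -/
theorem per_interval_forward_energy_estimate
    {V : Type*} [NormedAddCommGroup V] [InnerProductSpace ℝ V]
    (m a : V →L[ℝ] V →L[ℝ] ℝ)
    (hm_symm : ∀ x y : V, m x y = m y x)
    (hm_pos : ∀ φ : V, 0 ≤ m φ φ)
    (ha_pos : ∀ φ : V, 0 ≤ a φ φ)
    (s t : ℝ) (hst : s ≤ t)
    (e e' : ℝ → V)
    (he : ∀ τ ∈ Set.Icc s t, HasDerivWithinAt e (e' τ) (Set.Icc s t) τ)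
    (he' : ContinuousOn e' (Set.Icc s t))
    (ρ : ℝ → ℝ) (hρ : ContinuousOn ρ (Set.Icc s t))
    (hres : ∀ τ ∈ Set.Icc s t, ∀ φ : V,
      |m (e' τ) φ + a (e τ) φ| ≤ ρ τ * Real.sqrt (a φ φ)) :
    m (e t) (e t) + ∫ τ in s..t, a (e τ) (e τ)
      ≤ (∫ τ in s..t, (ρ τ)^2) + m (e s) (e s) :=
  per_interval_forward_energy_estimate_general m a hm_symm ha_pos s t hst e e' he ρ hρ hres
end

section
/- Let s ≤ t, let ε : ℝ → V be continuously differentiable on [s, t], and let ρ : ℝ → ℝ be continuous on [s, t] such that for every τ ∈ [s, t] and every φ ∈ V the residual bound |−m(ε′(τ), φ) + a(φ, ε(τ))| ≤ ρ(τ)·√(a(φ, φ)) holds. Then m(ε(s), ε(s)) + ∫_s^t a(ε(τ), ε(τ)) dτ ≤ ∫_s^t ρ(τ)² dτ + m(ε(t), ε(t)). (This is the per-interval backward (adjoint) energy estimate, inequality (3.17) in the proof of Lemma thm:errorBoundAdjointEnergy, for strong solutions on a subinterval on which the switching signal is constant; ρ(τ) bounds the a-dual norm of the adjoint residual Q(τ).)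 -/
/-!
Testing the residual bound with `φ = ε(τ)` and applying Young's inequality
`ρ √a ≤ (ρ² + a) / 2` gives the pointwise bound `a(ε, ε) ≤ ρ² + 2 m(ε′, ε)`.
By the symmetry of `m`, `2 m(ε′, ε)` is the derivative of the mass energy `m(ε, ε)`,
so integrating over `[s, t]` turns its integral into `m(ε(t), ε(t)) − m(ε(s), ε(s))`.
-/

open Set

section SymmetricBilinear

variable {E : Type*} [NormedAddCommGroup E] [NormedSpace ℝ E]
  {B : E →L[ℝ] E →L[ℝ] ℝ} {u u' : ℝ → E}

theorem HasDerivWithinAt.apply_self_of_symm (hB : ∀ x y, B x y = B y x) {S : Set ℝ} {τ : ℝ}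
    {v : E} (hu : HasDerivWithinAt u v S τ) :
    HasDerivWithinAt (fun τ => B (u τ) (u τ)) (2 * B v (u τ)) S τ := by
  have h := (B.hasFDerivAt.comp_hasDerivWithinAt τ hu).clm_apply hu
  rwa [Function.comp_apply, hB (u τ) v, ← two_mul] at h

theorem integral_two_mul_apply_deriv_self_eq_sub (hB : ∀ x y, B x y = B y x) {s t : ℝ}
    (hst : s ≤ t) (hu : ∀ τ ∈ Icc s t, HasDerivWithinAt u (u' τ) (Icc s t) τ)
    (hu' : ContinuousOn u' (Icc s t)) :
    ∫ τ in s..t, 2 * B (u' τ) (u τ) = B (u t) (u t) - B (u s) (u s) := by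
  have hu_cont : ContinuousOn u (Icc s t) := fun τ hτ => (hu τ hτ).continuousWithinAt
  refine intervalIntegral.integral_eq_sub_of_hasDerivAt_of_le hst
    ((B.continuous.comp_continuousOn hu_cont).clm_apply hu_cont) (fun τ hτ => ?_)
    ((continuousOn_const.mul ((B.continuous.comp_continuousOn hu').clm_apply hu_cont)
      ).intervalIntegrable_of_Icc hst)
  exact ((hu τ (Ioo_subset_Icc_self hτ)).apply_self_of_symm hB).hasDerivAt
    (Icc_mem_nhds hτ.1 hτ.2)

end SymmetricBilinear

theorem le_sq_add_two_mul_of_abs_neg_add_le_mul_sqrt {A b r : ℝ} (hA : 0 ≤ A)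
    (h : |-b + A| ≤ r * √A) : A ≤ r ^ 2 + 2 * b := by
  have young : r * √A ≤ (r ^ 2 + A) / 2 := by
    nlinarith [sq_nonneg (r - √A), Real.sq_sqrt hA]
  linarith [le_abs_self (-b + A)]

theorem per_interval_backward_energy_estimate_general
    {V : Type*} [NormedAddCommGroup V] [InnerProductSpace ℝ V]
    (m a : V →L[ℝ] V →L[ℝ] ℝ)
    (hm_symm : ∀ x y : V, m x y = m y x)
    (ha_pos : ∀ φ : V, 0 ≤ a φ φ)
    (s t : ℝ) (hst : s ≤ t)
    (ε ε' : ℝ → V)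
    (hε : ∀ τ ∈ Set.Icc s t, HasDerivWithinAt ε (ε' τ) (Set.Icc s t) τ)
    (hε' : ContinuousOn ε' (Set.Icc s t))
    (ρ : ℝ → ℝ) (hρ : ContinuousOn ρ (Set.Icc s t))
    (hres : ∀ τ ∈ Set.Icc s t, ∀ φ : V,
      |-(m (ε' τ) φ) + a φ (ε τ)| ≤ ρ τ * Real.sqrt (a φ φ)) :
    m (ε s) (ε s) + ∫ τ in s..t, a (ε τ) (ε τ)
      ≤ (∫ τ in s..t, (ρ τ)^2) + m (ε t) (ε t) := by
  have hε_cont : ContinuousOn ε (Icc s t) := fun τ hτ => (hε τ hτ).continuousWithinAt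
  have hρ_int : IntervalIntegrable (fun τ => ρ τ ^ 2) MeasureTheory.volume s t :=
    (hρ.pow 2).intervalIntegrable_of_Icc hst
  have hm_int : IntervalIntegrable (fun τ => 2 * m (ε' τ) (ε τ)) MeasureTheory.volume s t :=
    (continuousOn_const.mul ((m.continuous.comp_continuousOn hε').clm_apply hε_cont)
      ).intervalIntegrable_of_Icc hst
  have ha_int : IntervalIntegrable (fun τ => a (ε τ) (ε τ)) MeasureTheory.volume s t :=
    ((a.continuous.comp_continuousOn hε_cont).clm_apply hε_cont).intervalIntegrable_of_Icc hst
  have hpointwise : ∀ τ ∈ Icc s t, a (ε τ) (ε τ) ≤ ρ τ ^ 2 + 2 * m (ε' τ) (ε τ) :=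
    fun τ hτ => le_sq_add_two_mul_of_abs_neg_add_le_mul_sqrt (ha_pos _) (hres τ hτ (ε τ))
  have henergy := integral_two_mul_apply_deriv_self_eq_sub hm_symm hst hε hε'
  calc m (ε s) (ε s) + ∫ τ in s..t, a (ε τ) (ε τ)
      ≤ m (ε s) (ε s) + ∫ τ in s..t, (ρ τ ^ 2 + 2 * m (ε' τ) (ε τ)) := by
        gcongr
        exact intervalIntegral.integral_mono_on hst ha_int (hρ_int.add hm_int) hpointwise
    _ = (∫ τ in s..t, ρ τ ^ 2) + m (ε t) (ε t) := by
        rw [intervalIntegral.integral_add hρ_int hm_int, henergy]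
        ring

/-- Per-interval backward (adjoint) energy estimate, inequality (3.17) in the
proof of Lemma 3.8 (thm:errorBoundAdjointEnergy): if on `[s, t]` the adjoint
error `ε` satisfies the residual bound `|−m(ε′(τ), φ) + a(φ, ε(τ))| ≤ ρ(τ)·√(a(φ,φ))`
for all `φ`, then `m(ε(s), ε(s)) + ∫ₛᵗ a(ε, ε) ≤ ∫ₛᵗ ρ² + m(ε(t), ε(t))`. -/
theorem per_interval_backward_energy_estimate
    {V : Type*} [NormedAddCommGroup V] [InnerProductSpace ℝ V]
    (m a : V →L[ℝ] V →L[ℝ] ℝ)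
    (hm_symm : ∀ x y : V, m x y = m y x)
    (hm_pos : ∀ φ : V, 0 ≤ m φ φ)
    (ha_pos : ∀ φ : V, 0 ≤ a φ φ)
    (s t : ℝ) (hst : s ≤ t)
    (ε ε' : ℝ → V)
    (hε : ∀ τ ∈ Set.Icc s t, HasDerivWithinAt ε (ε' τ) (Set.Icc s t) τ)
    (hε' : ContinuousOn ε' (Set.Icc s t))
    (ρ : ℝ → ℝ) (hρ : ContinuousOn ρ (Set.Icc s t))
    (hres : ∀ τ ∈ Set.Icc s t, ∀ φ : V,
      |-(m (ε' τ) φ) + a φ (ε τ)| ≤ ρ τ * Real.sqrt (a φ φ)) :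
    m (ε s) (ε s) + ∫ τ in s..t, a (ε τ) (ε τ)
      ≤ (∫ τ in s..t, (ρ τ)^2) + m (ε t) (ε t) :=
  per_interval_backward_energy_estimate_general m a hm_symm ha_pos s t hst ε ε' hε hε' ρ hρ hres
end

section
/- Let t₀ < T, let δ : ℝ → ℝ^p be continuous on [t₀, T], let μ ≥ 0, and let ε : ℝ → V be continuously differentiable on [t₀, T] and satisfy, for all τ ∈ [t₀, T] and all φ ∈ V, the adjoint equation −m(ε′(τ), φ) + a(φ, ε(τ)) = ⟨δ(τ), Cφ⟩_{ℝ^p}, together with the terminal condition m(ε(T), φ) = μ·⟨δ(T), Cφ⟩_{ℝ^p} for all φ ∈ V. Then m(ε(t₀), ε(t₀)) ≤ (γ_a²/2)·∫_{t₀}^{T} ‖δ(τ)‖²_{ℝ^p} dτ + μ²·γ_m²·‖δ(T)‖²_{ℝ^p}. (This is the strong-solution, single-mode form of Lemma lem:relationIntermeadiateAdjoints, estimates (3.4a)–(3.4b): the initial value of the adjoint error driven by an output mismatch δ is controlled by the L²-norm of δ and its terminal value.) -/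
/-!
Energy estimate for the adjoint equation. Testing the equation with `φ = ε(τ)` and using the
symmetry of `m` gives `d/dτ m(ε, ε) = 2 m(ε′, ε) = 2 a(ε, ε) − 2 ⟨δ, Cε⟩`, and the output bound
`‖Cε‖ ≤ γ_a √(a(ε, ε))` with Young's inequality bounds this below by `−(γ_a²/2) ‖δ‖²`.
Integrating over `[t₀, T]` controls `m(ε(t₀), ε(t₀))` by the terminal energy plus the `L²`
term, and testing the terminal condition with `φ = ε(T)` gives
`m(ε(T), ε(T)) ≤ |μ| γ_m ‖δ(T)‖ √(m(ε(T), ε(T)))`, i.e. the terminal energy is at most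
`μ² γ_m² ‖δ(T)‖²`.
-/

open Set intervalIntegral

open scoped RealInnerProductSpace

theorem le_sq_of_le_mul_sqrt {x k : ℝ} (h : x ≤ k * √x) : x ≤ k ^ 2 := by
  rcases le_or_gt x 0 with hx | hx
  · exact hx.trans (sq_nonneg k)
  · have hsqrt : √x ≤ k := by nlinarith [Real.mul_self_sqrt hx.le, Real.sqrt_pos.2 hx]
    calc x = √x ^ 2 := (Real.sq_sqrt hx.le).symm
      _ ≤ k ^ 2 := pow_le_pow_left₀ (Real.sqrt_nonneg x) hsqrt 2

theorem HasDerivWithinAt.bilin_self_of_symm {V : Type*} [NormedAddCommGroup V] [NormedSpace ℝ V]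
    {m : V →L[ℝ] V →L[ℝ] ℝ} (hm : ∀ x y : V, m x y = m y x) {ε : ℝ → V} {ε' : V}
    {s : Set ℝ} {τ : ℝ} (hε : HasDerivWithinAt ε ε' s τ) :
    HasDerivWithinAt (fun t => m (ε t) (ε t)) (2 * m ε' (ε τ)) s τ := by
  have hmε : HasDerivWithinAt (fun t => m (ε t)) (m ε') s τ :=
    m.hasFDerivAt.comp_hasDerivWithinAt τ hε
  have h := hmε.clm_apply hε
  rwa [hm (ε τ) ε', ← two_mul] at h

section InnerProductSpace

variable {F : Type*} [NormedAddCommGroup F] [InnerProductSpace ℝ F]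

theorem neg_mul_sq_le_two_mul_of_neg_add_eq_inner {A M γ : ℝ} {d c : F} (hA : 0 ≤ A)
    (hc : ‖c‖ ≤ γ * √A) (h : -M + A = ⟪d, c⟫) : -(γ ^ 2 / 2 * ‖d‖ ^ 2) ≤ 2 * M := by
  have hinner : ⟪d, c⟫ ≤ ‖d‖ * (γ * √A) :=
    (real_inner_le_norm d c).trans (mul_le_mul_of_nonneg_left hc (norm_nonneg d))
  nlinarith [Real.sq_sqrt hA, sq_nonneg (2 * √A - γ * ‖d‖)]

theorem le_mul_sq_of_eq_mul_inner {M μ γ : ℝ} {d c : F} (hc : ‖c‖ ≤ γ * √M)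
    (h : M = μ * ⟪d, c⟫) : M ≤ μ ^ 2 * γ ^ 2 * ‖d‖ ^ 2 := by
  have hM : M ≤ (|μ| * ‖d‖ * γ) * √M :=
    calc M ≤ |μ| * |⟪d, c⟫| := h ▸ (le_abs_self _).trans (abs_mul μ _).le
      _ ≤ |μ| * (‖d‖ * (γ * √M)) := by
          gcongr
          exact (abs_real_inner_le_norm d c).trans
            (mul_le_mul_of_nonneg_left hc (norm_nonneg d))
      _ = (|μ| * ‖d‖ * γ) * √M := by ring
  calc M ≤ (|μ| * ‖d‖ * γ) ^ 2 := le_sq_of_le_mul_sqrt hM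
    _ = μ ^ 2 * γ ^ 2 * ‖d‖ ^ 2 := by rw [mul_pow, mul_pow, sq_abs]; ring

end InnerProductSpace

theorem adjoint_initial_value_estimate_general
    {V : Type*} [NormedAddCommGroup V] [InnerProductSpace ℝ V]
    (m a : V →L[ℝ] V →L[ℝ] ℝ)
    (hm_symm : ∀ x y : V, m x y = m y x)
    (ha_pos : ∀ φ : V, 0 ≤ a φ φ)
    (p : ℕ) (C : V →ₗ[ℝ] EuclideanSpace ℝ (Fin p))
    (γa γm : ℝ)
    (hCa : ∀ φ : V, ‖C φ‖ ≤ γa * Real.sqrt (a φ φ))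
    (hCm : ∀ φ : V, ‖C φ‖ ≤ γm * Real.sqrt (m φ φ))
    (t₀ T : ℝ) (hT : t₀ < T)
    (δ : ℝ → EuclideanSpace ℝ (Fin p)) (hδ : ContinuousOn δ (Set.Icc t₀ T))
    (μ : ℝ)
    (ε ε' : ℝ → V)
    (hε : ∀ τ ∈ Set.Icc t₀ T, HasDerivWithinAt ε (ε' τ) (Set.Icc t₀ T) τ)
    (heq : ∀ τ ∈ Set.Icc t₀ T, ∀ φ : V,
      -(m (ε' τ) φ) + a φ (ε τ) = ⟪δ τ, C φ⟫)
    (hterm : ∀ φ : V, m (ε T) φ = μ * ⟪δ T, C φ⟫) :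
    m (ε t₀) (ε t₀)
      ≤ (γa^2 / 2) * (∫ τ in t₀..T, ‖δ τ‖^2) + μ^2 * γm^2 * ‖δ T‖^2 := by
  set E : ℝ → ℝ := fun τ => m (ε τ) (ε τ)
  have hE : ∀ τ ∈ Icc t₀ T, HasDerivWithinAt E (2 * m (ε' τ) (ε τ)) (Icc t₀ T) τ :=
    fun τ hτ => (hε τ hτ).bilin_self_of_symm hm_symm
  have hdecay : ∫ τ in t₀..T, -(γa ^ 2 / 2 * ‖δ τ‖ ^ 2) ≤ E T - E t₀ :=
    integral_le_sub_of_hasDeriv_right_of_le hT.le (fun τ hτ => (hE τ hτ).continuousWithinAt)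
      (fun τ hτ => ((hE τ (Ioo_subset_Icc_self hτ)).hasDerivAt
        (Icc_mem_nhds hτ.1 hτ.2)).hasDerivWithinAt)
      (continuousOn_const.mul (hδ.norm.pow 2)).neg.integrableOn_Icc
      (fun τ hτ => neg_mul_sq_le_two_mul_of_neg_add_eq_inner (ha_pos _) (hCa _)
        (heq τ (Ioo_subset_Icc_self hτ) (ε τ)))
  have hterminal : E T ≤ μ ^ 2 * γm ^ 2 * ‖δ T‖ ^ 2 :=
    le_mul_sq_of_eq_mul_inner (hCm _) (hterm _)
  rw [integral_neg, integral_const_mul] at hdecay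
  linarith

/-- Strong-solution, single-mode form of Lemma 3.4
(lem:relationIntermeadiateAdjoints), estimates (3.4a)–(3.4b): if `ε` solves the
adjoint equation `−m(ε′(τ), φ) + a(φ, ε(τ)) = ⟨δ(τ), Cφ⟩` on `[t₀, T]` with the
terminal condition `m(ε(T), φ) = μ⟨δ(T), Cφ⟩`, then
`m(ε(t₀), ε(t₀)) ≤ (γ_a²/2) ∫_{t₀}^{T} ‖δ‖² + μ² γ_m² ‖δ(T)‖²`. -/
theorem adjoint_initial_value_estimate
    {V : Type*} [NormedAddCommGroup V] [InnerProductSpace ℝ V]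
    (m a : V →L[ℝ] V →L[ℝ] ℝ)
    (hm_symm : ∀ x y : V, m x y = m y x)
    (hm_pos : ∀ φ : V, 0 ≤ m φ φ)
    (ha_pos : ∀ φ : V, 0 ≤ a φ φ)
    (p : ℕ) (C : V →ₗ[ℝ] EuclideanSpace ℝ (Fin p))
    (γa γm : ℝ) (hγa : 0 < γa) (hγm : 0 < γm)
    (hCa : ∀ φ : V, ‖C φ‖ ≤ γa * Real.sqrt (a φ φ))
    (hCm : ∀ φ : V, ‖C φ‖ ≤ γm * Real.sqrt (m φ φ))
    (t₀ T : ℝ) (hT : t₀ < T)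
    (δ : ℝ → EuclideanSpace ℝ (Fin p)) (hδ : ContinuousOn δ (Set.Icc t₀ T))
    (μ : ℝ) (hμ : 0 ≤ μ)
    (ε ε' : ℝ → V)
    (hε : ∀ τ ∈ Set.Icc t₀ T, HasDerivWithinAt ε (ε' τ) (Set.Icc t₀ T) τ)
    (hε' : ContinuousOn ε' (Set.Icc t₀ T))
    (heq : ∀ τ ∈ Set.Icc t₀ T, ∀ φ : V,
      -(m (ε' τ) φ) + a φ (ε τ) = ⟪δ τ, C φ⟫)
    (hterm : ∀ φ : V, m (ε T) φ = μ * ⟪δ T, C φ⟫) :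
    m (ε t₀) (ε t₀)
      ≤ (γa^2 / 2) * (∫ τ in t₀..T, ‖δ τ‖^2) + μ^2 * γm^2 * ‖δ T‖^2 :=
  adjoint_initial_value_estimate_general m a hm_symm ha_pos p C γa γm hCa hCm t₀ T hT δ hδ μ ε ε' hε
    heq hterm
end
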